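/- arXiv:1809.00104 — 5 statements merged into one kernel-verified Lean document; each statement's English description precedes it below -/
import Mathlib

section
/- Fix k ∈ {2,3}. Suppose n and m are positive integers such that the multiset consisting of n copies of 1/2 and m copies of -1/2 satisfies e_j > 0 for 1 ≤ j < k and e_k = 0. Then (n,m) must be of one of the following forms: if k = 2, then n = (ℓ+1)(ℓ+2)/2 and m = ℓ(ℓ+1)/2 for some positive integer ℓ; if k = 3, then either n = (ℓ+1)(3ℓ+2)/2 and m = ℓ(3ℓ-1)/2, or n = (ℓ+1)(3ℓ+4)/2 and m = ℓ(3ℓ+1)/2, for some positive integer ℓ. -/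
/-!
Since every eigenvalue is `±1/2`, the first elementary symmetric functions are polynomials in
`d = n - m` and `s = n + m`: `8 e₂ = d² - s` and `48 e₃ = d (d² - 3s + 2)`. The positivity of `e₁`
means `d > 0`, so `e_k = 0` becomes the Diophantine equation `d² = s` (for `k = 2`) or
`d² + 2 = 3s` (for `k = 3`). In the second case `d ≢ 0 (mod 3)`, and writing `d = ℓ + 1`,
resp. `d = 3ℓ + 1` or `d = 3ℓ + 2`, solves for `n` and `m`; `m > 0` forces `ℓ > 0`.
-/

/-- The multiset of eigenvalues: `n` copies of `1/2` and `m` copies of `-1/2`. -/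
noncomputable def schoutenEigenvalues (n m : ℕ) : Multiset ℝ :=
  Multiset.replicate n ((1 : ℝ) / 2) + Multiset.replicate m (-(1 : ℝ) / 2)

namespace Multiset

variable {R : Type*} [CommSemiring R]

theorem esymm_cons_succ (a : R) (s : Multiset R) (k : ℕ) :
    (a ::ₘ s).esymm (k + 1) = s.esymm (k + 1) + a * s.esymm k := by
  simp only [esymm, powersetCard_cons, map_add, sum_add, map_map, Function.comp_def, prod_cons,
    ← sum_map_mul_left]

theorem esymm_one (s : Multiset R) : s.esymm 1 = s.sum := by
  simp [esymm, powersetCard_one, map_map]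

end Multiset

open Multiset

section Eigenvalues

variable (n m : ℕ)

theorem schoutenEigenvalues_succ_left :
    schoutenEigenvalues (n + 1) m = (1 / 2 : ℝ) ::ₘ schoutenEigenvalues n m := by
  simp [schoutenEigenvalues, replicate_succ, cons_add]

theorem schoutenEigenvalues_succ_right :
    schoutenEigenvalues n (m + 1) = (-1 / 2 : ℝ) ::ₘ schoutenEigenvalues n m := by
  simp [schoutenEigenvalues, replicate_succ, add_cons]

theorem esymm_one_schoutenEigenvalues :
    (schoutenEigenvalues n m).esymm 1 = ((n : ℝ) - m) / 2 := by
  rw [esymm_one, schoutenEigenvalues, sum_add, sum_replicate, sum_replicate]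
  ring

theorem esymm_two_schoutenEigenvalues :
    (schoutenEigenvalues n m).esymm 2 = (((n : ℝ) - m) ^ 2 - (n + m)) / 8 := by
  induction n with
  | zero =>
    induction m with
    | zero => simp [schoutenEigenvalues, esymm, powersetCard_zero_right]
    | succ m ih =>
      rw [schoutenEigenvalues_succ_right, esymm_cons_succ, esymm_one_schoutenEigenvalues, ih]
      push_cast
      ring
  | succ n ih =>
    rw [schoutenEigenvalues_succ_left, esymm_cons_succ, esymm_one_schoutenEigenvalues, ih]
    push_cast
    ring

theorem esymm_three_schoutenEigenvalues :
    (schoutenEigenvalues n m).esymm 3 =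
      ((n : ℝ) - m) * (((n : ℝ) - m) ^ 2 - 3 * (n + m) + 2) / 48 := by
  induction n with
  | zero =>
    induction m with
    | zero => simp [schoutenEigenvalues, esymm, powersetCard_zero_right]
    | succ m ih =>
      rw [schoutenEigenvalues_succ_right, esymm_cons_succ, esymm_two_schoutenEigenvalues, ih]
      push_cast
      ring
  | succ n ih =>
    rw [schoutenEigenvalues_succ_left, esymm_cons_succ, esymm_two_schoutenEigenvalues, ih]
    push_cast
    ring

variable {n m}

theorem esymm_one_schoutenEigenvalues_pos_iff :
    0 < (schoutenEigenvalues n m).esymm 1 ↔ m < n := by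
  rw [esymm_one_schoutenEigenvalues, div_pos_iff_of_pos_right two_pos, sub_pos, Nat.cast_lt]

theorem esymm_two_schoutenEigenvalues_eq_zero_iff :
    (schoutenEigenvalues n m).esymm 2 = 0 ↔ ((n : ℝ) - m) ^ 2 = n + m := by
  rw [esymm_two_schoutenEigenvalues, div_eq_zero_iff, or_iff_left (by norm_num), sub_eq_zero]

theorem esymm_three_schoutenEigenvalues_eq_zero_iff (hmn : m < n) :
    (schoutenEigenvalues n m).esymm 3 = 0 ↔ ((n : ℝ) - m) ^ 2 + 2 = 3 * (n + m) := by
  have hd : (n : ℝ) - m ≠ 0 := sub_ne_zero.mpr (by exact_mod_cast hmn.ne')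
  rw [esymm_three_schoutenEigenvalues, div_eq_zero_iff, or_iff_left (by norm_num), mul_eq_zero,
    or_iff_right hd]
  constructor <;> intro h <;> linarith

end Eigenvalues

section Diophantine

variable {n m : ℕ}

theorem exists_of_sq_sub_eq_add (hm : 0 < m) (hmn : m < n) (h : ((n : ℝ) - m) ^ 2 = n + m) :
    ∃ ℓ : ℕ, 0 < ℓ ∧ n = (ℓ + 1) * (ℓ + 2) / 2 ∧ m = ℓ * (ℓ + 1) / 2 := by
  obtain ⟨ℓ, rfl⟩ : ∃ ℓ, n = m + (ℓ + 1) := ⟨n - m - 1, by omega⟩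
  have h' : (ℓ + 1) ^ 2 = 2 * m + (ℓ + 1) := by
    push_cast at h
    exact_mod_cast (by linear_combination h : ((ℓ : ℝ) + 1) ^ 2 = 2 * m + (ℓ + 1))
  refine ⟨ℓ, Nat.pos_of_ne_zero ?_, ?_, ?_⟩
  · rintro rfl
    norm_num at h'
    omega
  · exact Nat.eq_div_of_mul_eq_left two_ne_zero (by linarith)
  · exact Nat.eq_div_of_mul_eq_left two_ne_zero (by linarith)

theorem exists_of_sq_sub_add_two_eq (hm : 0 < m) (hmn : m ≤ n)
    (h : ((n : ℝ) - m) ^ 2 + 2 = 3 * (n + m)) :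
    ∃ ℓ : ℕ, 0 < ℓ ∧
      ((n = (ℓ + 1) * (3 * ℓ + 2) / 2 ∧ m = ℓ * (3 * ℓ - 1) / 2) ∨
       (n = (ℓ + 1) * (3 * ℓ + 4) / 2 ∧ m = ℓ * (3 * ℓ + 1) / 2)) := by
  obtain ⟨d, rfl⟩ : ∃ d, n = m + d := ⟨n - m, by omega⟩
  have h' : d ^ 2 + 2 = 3 * (2 * m + d) := by
    push_cast at h
    exact_mod_cast (by linear_combination h : (d : ℝ) ^ 2 + 2 = 3 * (2 * m + d))
  obtain ⟨ℓ, rfl | rfl | rfl⟩ : ∃ ℓ, d = 3 * ℓ ∨ d = 3 * ℓ + 1 ∨ d = 3 * ℓ + 2 :=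
    ⟨d / 3, by omega⟩
  · have h3 : 3 ∣ (3 * ℓ) ^ 2 + 2 := h' ▸ dvd_mul_right 3 _
    have h32 := (Nat.dvd_add_right (dvd_pow (dvd_mul_right 3 ℓ) two_ne_zero)).mp h3
    norm_num at h32
  · refine ⟨ℓ, Nat.pos_of_ne_zero ?_, Or.inl ⟨?_, ?_⟩⟩
    · rintro rfl
      norm_num at h'
      omega
    · exact Nat.eq_div_of_mul_eq_left two_ne_zero (by linarith)
    · refine Nat.eq_div_of_mul_eq_left two_ne_zero ?_
      rw [Nat.mul_sub, mul_one]
      exact Nat.eq_sub_of_add_eq (by linarith)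
  · refine ⟨ℓ, Nat.pos_of_ne_zero ?_, Or.inr ⟨?_, ?_⟩⟩
    · rintro rfl
      norm_num at h'
      omega
    · exact Nat.eq_div_of_mul_eq_left two_ne_zero (by linarith)
    · exact Nat.eq_div_of_mul_eq_left two_ne_zero (by linarith)

end Diophantine

theorem dimensions_classification_general (k : ℕ)
    (n m : ℕ) (hm : 0 < m)
    (hpos : ∀ j, 1 ≤ j → j < k → 0 < (schoutenEigenvalues n m).esymm j)
    (hzero : (schoutenEigenvalues n m).esymm k = 0) :
    (k = 2 → ∃ ℓ : ℕ, 0 < ℓ ∧ n = (ℓ + 1) * (ℓ + 2) / 2 ∧ m = ℓ * (ℓ + 1) / 2) ∧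
    (k = 3 → ∃ ℓ : ℕ, 0 < ℓ ∧
      ((n = (ℓ + 1) * (3 * ℓ + 2) / 2 ∧ m = ℓ * (3 * ℓ - 1) / 2) ∨
       (n = (ℓ + 1) * (3 * ℓ + 4) / 2 ∧ m = ℓ * (3 * ℓ + 1) / 2))) := by
  refine ⟨?_, ?_⟩ <;> rintro rfl <;>
    have hmn := esymm_one_schoutenEigenvalues_pos_iff.mp (hpos 1 le_rfl (by norm_num))
  · exact exists_of_sq_sub_eq_add hm hmn (esymm_two_schoutenEigenvalues_eq_zero_iff.mp hzero)
  · exact exists_of_sq_sub_add_two_eq hm hmn.le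
      ((esymm_three_schoutenEigenvalues_eq_zero_iff hmn).mp hzero)

theorem dimensions_classification (k : ℕ) (hk : k = 2 ∨ k = 3)
    (n m : ℕ) (hn : 0 < n) (hm : 0 < m)
    (hpos : ∀ j, 1 ≤ j → j < k → 0 < (schoutenEigenvalues n m).esymm j)
    (hzero : (schoutenEigenvalues n m).esymm k = 0) :
    (k = 2 → ∃ ℓ : ℕ, 0 < ℓ ∧ n = (ℓ + 1) * (ℓ + 2) / 2 ∧ m = ℓ * (ℓ + 1) / 2) ∧
    (k = 3 → ∃ ℓ : ℕ, 0 < ℓ ∧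
      ((n = (ℓ + 1) * (3 * ℓ + 2) / 2 ∧ m = ℓ * (3 * ℓ - 1) / 2) ∨
       (n = (ℓ + 1) * (3 * ℓ + 4) / 2 ∧ m = ℓ * (3 * ℓ + 1) / 2))) :=
  dimensions_classification_general k n m hm hpos hzero
end

section
/- Let ℓ ≥ 1 and set n = (ℓ+1)(3ℓ+4)/2, m = ℓ(3ℓ+1)/2. Let B be diagonal with n copies of 1/2 and m copies of -1/2. Then T_2(B) is diagonal with value ℓ(3ℓ+1)/4 on the first block and value (ℓ+1)(3ℓ+4)/4 on the second block; in particular T_2(B) is positive definite. -/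
open Matrix

/-- `σ_k` of a diagonal matrix: the `k`-th elementary symmetric function of its
diagonal entries (= its eigenvalues). -/
noncomputable def sigmaDiag {d : ℕ} (v : Fin d → ℝ) (k : ℕ) : ℝ :=
  (Finset.univ.val.map v).esymm k

/-- The second Newton tensor `T_2(B) = σ_2(B)·Id − σ_1(B)·B + B²` of a diagonal matrix. -/
noncomputable def newtonTwo {d : ℕ} (v : Fin d → ℝ) : Matrix (Fin d) (Fin d) ℝ :=
  (sigmaDiag v 2) • (1 : Matrix (Fin d) (Fin d) ℝ)
    - (sigmaDiag v 1) • Matrix.diagonal v + (Matrix.diagonal v) ^ 2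

/-!
On each block `B` is `±1/2`, so `T_2(B)` is diagonal and its entry in direction `i` is `σ_2` of
the eigenvalues with the `i`-th one omitted: with `p` halves and `q` minus-halves left,
`σ_2 = ((p - q)² - (p + q)) / 8` by Newton's identity `2 σ_2 = σ_1² - Σ λ_i²`. Substituting the
pentagonal numbers `n`, `m` gives `ℓ(3ℓ+1)/4` and `(ℓ+1)(3ℓ+4)/4`, both positive for `ℓ ≥ 1`.
-/

theorem sigmaDiag_eq_eval_esymm {d : ℕ} (v : Fin d → ℝ) (k : ℕ) :
    sigmaDiag v k = MvPolynomial.eval v (MvPolynomial.esymm (Fin d) ℝ k) :=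
  (MvPolynomial.aeval_esymm_eq_multiset_esymm (Fin d) ℝ k v).symm

theorem sigmaDiag_one {d : ℕ} (v : Fin d → ℝ) : sigmaDiag v 1 = ∑ i, v i := by
  simp [sigmaDiag_eq_eval_esymm, MvPolynomial.esymm_one]

open Finset in
theorem two_mul_sigmaDiag_two {d : ℕ} (v : Fin d → ℝ) :
    2 * sigmaDiag v 2 = (∑ i, v i) ^ 2 - ∑ i, v i ^ 2 := by
  have newton := congrArg (MvPolynomial.aeval v) (MvPolynomial.mul_esymm_eq_sum (Fin d) ℝ 2)
  rw [show {a ∈ antidiagonal 2 | a.1 < 2} = {(0, 2), (1, 1)} from by decide,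
    sum_pair (by decide)] at newton
  simp only [Nat.cast_ofNat, MvPolynomial.aeval_eq_eval, map_mul, MvPolynomial.eval_ofNat,
    ← sigmaDiag_eq_eval_esymm, Nat.reduceAdd, pow_zero, MvPolynomial.esymm_zero, mul_one,
    MvPolynomial.psum, one_mul, pow_one, MvPolynomial.esymm_one, neg_mul, map_pow, map_neg,
    map_one, map_add, map_sum, MvPolynomial.eval_X] at newton
  linear_combination newton

theorem newtonTwo_eq_diagonal {d : ℕ} (v : Fin d → ℝ) :
    newtonTwo v = diagonal fun i => sigmaDiag v 2 - sigmaDiag v 1 * v i + v i ^ 2 := by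
  rw [newtonTwo, diagonal_pow, ← diagonal_one, ← diagonal_smul, ← diagonal_smul,
    diagonal_sub, diagonal_add]
  simp only [Pi.smul_apply, Pi.pow_apply, smul_eq_mul, mul_one]

theorem Fin.sum_comp_ite_val_lt {α M : Type*} [AddCommMonoid M] (n m : ℕ) (f : α → M)
    (a b : α) : ∑ i : Fin (n + m), f (if (i : ℕ) < n then a else b) = n • f a + m • f b := by
  simp [Fin.sum_univ_add]

theorem newtonTwo_ite_half (n m : ℕ) :
    newtonTwo (fun i : Fin (n + m) => if (i : ℕ) < n then (1 : ℝ) / 2 else -(1 : ℝ) / 2) =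
      diagonal fun i : Fin (n + m) => if (i : ℕ) < n
        then (((n : ℝ) - 1 - m) ^ 2 - (n - 1 + m)) / 8
        else (((n : ℝ) - m + 1) ^ 2 - (n + m - 1)) / 8 := by
  have sum_eq := Fin.sum_comp_ite_val_lt n m id (1 / 2 : ℝ) (-1 / 2)
  have sum_sq_eq := Fin.sum_comp_ite_val_lt n m (· ^ 2) (1 / 2 : ℝ) (-1 / 2)
  have σ₂ := two_mul_sigmaDiag_two
    (fun i : Fin (n + m) => if (i : ℕ) < n then (1 : ℝ) / 2 else -(1 : ℝ) / 2)
  simp only [id, nsmul_eq_mul] at sum_eq sum_sq_eq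
  rw [sum_eq, sum_sq_eq] at σ₂
  rw [newtonTwo_eq_diagonal, sigmaDiag_one, sum_eq]
  congr 1
  funext i
  split_ifs <;> linear_combination σ₂ / 2

theorem Nat.cast_mul_three_mul_add_one_div_two (a : ℕ) :
    ((a * (3 * a + 1) / 2 : ℕ) : ℝ) = a * (3 * a + 1) / 2 := by
  have two_dvd : 2 ∣ a * (3 * a + 1) := by
    rcases Nat.even_or_odd a with h | h <;>
      simp [← even_iff_two_dvd, Nat.even_add, h, parity_simps]
  rw [Nat.cast_div two_dvd two_ne_zero]
  norm_num

theorem newton_two_schouten_case3 (ℓ : ℕ) (hℓ : 1 ≤ ℓ)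
    (n m : ℕ) (hn : n = (ℓ + 1) * (3 * ℓ + 4) / 2) (hm : m = ℓ * (3 * ℓ + 1) / 2)
    (v : Fin (n + m) → ℝ)
    (hv : v = fun i : Fin (n + m) => if (i : ℕ) < n then (1 : ℝ) / 2 else -(1 : ℝ) / 2) :
    newtonTwo v =
      Matrix.diagonal (fun i : Fin (n + m) =>
        if (i : ℕ) < n then (ℓ : ℝ) * (3 * ℓ + 1) / 4 else ((ℓ : ℝ) + 1) * (3 * ℓ + 4) / 4) ∧
    (newtonTwo v).PosDef := by
  have hn' : (n : ℝ) = (ℓ + 1) * (3 * ℓ + 4) / 2 := by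
    rw [hn, show (ℓ + 1) * (3 * ℓ + 4) = (ℓ + 1) * (3 * (ℓ + 1) + 1) by ring,
      Nat.cast_mul_three_mul_add_one_div_two]
    push_cast
    ring
  have hm' : (m : ℝ) = ℓ * (3 * ℓ + 1) / 2 := by
    rw [hm, Nat.cast_mul_three_mul_add_one_div_two]
  have hT : newtonTwo v = Matrix.diagonal (fun i : Fin (n + m) =>
      if (i : ℕ) < n then (ℓ : ℝ) * (3 * ℓ + 1) / 4 else ((ℓ : ℝ) + 1) * (3 * ℓ + 4) / 4) := by
    rw [hv, newtonTwo_ite_half, hn', hm']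
    congr 1
    funext i
    split_ifs <;> ring
  have hℓ' : (1 : ℝ) ≤ ℓ := by exact_mod_cast hℓ
  refine ⟨hT, ?_⟩
  rw [hT, posDef_diagonal_iff]
  intro i
  split_ifs <;> nlinarith
end

section
/- Let P = (1/2)Id_n ⊕ (−1/2)Id_m and A = κ·Id_n ⊕ 0·Id_m be commuting diagonal matrices of size d = n + m. Define the mixed symmetric function σ_{j,1}(P,A) as the polarization of σ_j evaluated at one copy of P and j−1 copies of A: σ_{j,1}(P,A) = (1/j!) δ^{j_1…j_j}_{i_1…i_j} P^{i_1}_{j_1} A^{i_2}_{j_2} ⋯ A^{i_j}_{j_j}. Then σ_{j,1}(P,A) = ((n−m+1−j)/(2j))·C(n, j−1)·κ^{j−1}. -/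
open Finset

/-- The generalized Kronecker delta `δ^{U_1 … U_r}_{L_1 … L_r}`. -/
noncomputable def genKronecker {d r : ℕ} (U L : Fin r → Fin d) : ℝ :=
  Matrix.det (Matrix.of fun a b => if U a = L b then (1 : ℝ) else 0)

/-- The mixed symmetric function `σ_{k,l}(B,C)`: the polarization of `σ_k` evaluated at
`l` copies of `B` and `k - l` copies of `C`, i.e.
`σ_{k,l}(B,C) = (1/k!) δ^{j_1…j_k}_{i_1…i_k} B^{i_1}_{j_1}⋯B^{i_l}_{j_l}
C^{i_{l+1}}_{j_{l+1}}⋯C^{i_k}_{j_k}`. -/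
noncomputable def mixedSigma (d k l : ℕ) (B C : Matrix (Fin d) (Fin d) ℝ) : ℝ :=
  (k.factorial : ℝ)⁻¹ * ∑ I : Fin k → Fin d, ∑ J : Fin k → Fin d,
    genKronecker J I *
      ∏ a : Fin k, (if (a : ℕ) < l then B (I a) (J a) else C (I a) (J a))

/-! Since both matrices are diagonal, only `J = I` survives in the defining double sum, and
`δ^I_I` is `1` or `0` according as `I` is injective or not; so `j! σ_{j,1}(P, A)` is the sum
over injective `I : Fin j → Fin d` of `P_{I₀ I₀} ∏_{a ≥ 1} A_{I_a I_a}`. As `A = κ·1_{i < n}`,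
the tuples with `I₀ = x` contribute `P_{xx} κ^{j-1}` times the number of injective
`(j-1)`-tuples in `{i < n} \ {x}`, a falling factorial. The `n` indices with `P_{xx} = 1/2`
and the `m` with `P_{xx} = -1/2` then give
`(κ^{j-1}/2) (n (n-1)_{j-1} - m n_{j-1}) = (κ^{j-1}/2) (n - m - j + 1) (j-1)! C(n, j-1)`. -/

open Function Matrix
open scoped Nat

theorem genKronecker_self {d r : ℕ} (I : Fin r → Fin d) :
    genKronecker I I = if Injective I then 1 else 0 := by
  unfold genKronecker
  split_ifs with h
  · have hid : (Matrix.of fun a b => if I a = I b then (1 : ℝ) else 0) = 1 := by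
      ext a b
      simp [Matrix.one_apply, h.eq_iff]
    rw [hid, det_one]
  · obtain ⟨a, b, hab, hne⟩ := not_injective_iff.mp h
    exact det_zero_of_row_eq hne (by ext c; simp [hab])

theorem mixedSigma_diagonal (d k l : ℕ) (b c : Fin d → ℝ) :
    mixedSigma d k l (diagonal b) (diagonal c) =
      (k ! : ℝ)⁻¹ * ∑ I : Fin k → Fin d,
        if Injective I then ∏ a : Fin k, (if (a : ℕ) < l then b (I a) else c (I a)) else 0 := by
  unfold mixedSigma
  congr 1
  refine sum_congr rfl fun I _ => ?_
  rw [Fintype.sum_eq_single I fun J hJ => ?_, genKronecker_self, ite_mul, one_mul, zero_mul]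
  · simp only [diagonal_apply_eq]
  · obtain ⟨a, ha⟩ := ne_iff.mp hJ
    rw [prod_eq_zero (mem_univ a), mul_zero]
    split_ifs <;> exact diagonal_apply_ne _ (Ne.symm ha)

section InjectiveTuples

variable {ι α : Type*} [Fintype ι] [DecidableEq ι] [Fintype α] [DecidableEq α]

theorem card_filter_injective_forall_mem (S : Finset α) :
    #{p : ι → α | Injective p ∧ ∀ i, p i ∈ S} = (#S).descFactorial (Fintype.card ι) := by
  rw [← Fintype.card_subtype, ← Fintype.card_coe S, ← Fintype.card_embedding_eq]
  exact Fintype.card_congr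
    { toFun p := ⟨fun i => ⟨p.1 i, p.2.2 i⟩, fun i i' h => p.2.1 (congrArg Subtype.val h)⟩
      invFun e := ⟨fun i => e i, Subtype.val_injective.comp e.injective, fun i => (e i).2⟩
      left_inv _ := rfl
      right_inv _ := rfl }

theorem sum_injective_prod_ite_mem (S : Finset α) (κ : ℝ) :
    ∑ p : ι → α, (if Injective p then ∏ i, (if p i ∈ S then κ else 0) else 0) =
      κ ^ Fintype.card ι * (#S).descFactorial (Fintype.card ι) := by
  calc ∑ p : ι → α, (if Injective p then ∏ i, (if p i ∈ S then κ else 0) else 0)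
      = ∑ p : ι → α, if Injective p ∧ ∀ i, p i ∈ S then κ ^ Fintype.card ι else 0 := by
        refine sum_congr rfl fun p _ => ?_
        rw [Fintype.prod_ite_zero, prod_const, card_univ, ← ite_and]
    _ = κ ^ Fintype.card ι * (#S).descFactorial (Fintype.card ι) := by
        rw [sum_ite, sum_const_zero, add_zero, sum_const, card_filter_injective_forall_mem, nsmul_eq_mul,
          mul_comm]

theorem sum_injective_head_mul_prod_tail_ite_mem (b : α → ℝ) (S : Finset α) (κ : ℝ) (k : ℕ) :
    ∑ I : Fin (k + 1) → α, (if Injective I then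
        ∏ a : Fin (k + 1), (if (a : ℕ) < 1 then b (I a) else if I a ∈ S then κ else 0) else 0) =
      κ ^ k * ∑ x, b x * (#(S.erase x)).descFactorial k := by
  rw [← (Fin.consEquiv fun _ => α).sum_comp, Fintype.sum_prod_type, mul_sum]
  refine sum_congr rfl fun x _ => ?_
  have hcons (p : Fin k → α) :
      (if Injective (Fin.cons x p : Fin (k + 1) → α) then
        ∏ a : Fin (k + 1), (if (a : ℕ) < 1 then b ((Fin.cons x p : Fin (k + 1) → α) a)
          else if (Fin.cons x p : Fin (k + 1) → α) a ∈ S then κ else 0) else 0) =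
      b x * if Injective p then ∏ a, (if p a ∈ S.erase x then κ else 0) else 0 := by
    simp only [Fin.prod_univ_succ, Fin.cons_zero, Fin.cons_succ, Fin.cons_injective_iff,
      Fin.val_zero, Fin.val_succ, if_true, Nat.lt_one_iff, Nat.succ_ne_zero, if_false]
    by_cases hp : Injective p
    · by_cases hx : x ∈ Set.range p
      · obtain ⟨a, rfl⟩ := hx
        rw [if_neg (by tauto), if_pos hp, prod_eq_zero (mem_univ a) (by simp), mul_zero]
      · rw [if_pos ⟨hx, hp⟩, if_pos hp]
        congr 1
        refine prod_congr rfl fun a _ => ?_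
        have hax : p a ≠ x := fun h => hx ⟨a, h⟩
        simp [hax]
    · rw [if_neg (by tauto), if_neg hp, mul_zero]
  refine (sum_congr rfl fun p _ => hcons p).trans ?_
  rw [← mul_sum, sum_injective_prod_ite_mem, Fintype.card_fin]
  ring

end InjectiveTuples

theorem natCast_mul_descFactorial_sub_one (n k : ℕ) :
    (n : ℝ) * (n - 1).descFactorial k = ((n : ℝ) - k) * n.descFactorial k := by
  cases n with
  | zero => cases k <;> simp
  | succ n =>
    rw [Nat.add_sub_cancel, ← Nat.cast_mul, ← Nat.succ_descFactorial_succ, Nat.descFactorial_succ]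
    by_cases hk : k ≤ n + 1
    · push_cast [Nat.cast_sub hk]
      ring
    · rw [Nat.descFactorial_eq_zero_iff_lt.mpr (by omega)]
      simp

theorem sum_sign_mul_descFactorial_card_erase (n m k : ℕ) :
    ∑ x : Fin (n + m), (if (x : ℕ) < n then (1 : ℝ) / 2 else -(1 : ℝ) / 2) *
        (#(({i | (i : ℕ) < n} : Finset (Fin (n + m))).erase x)).descFactorial k =
      ((n : ℝ) - k - m) / 2 * n.descFactorial k := by
  have hcard : #({i | (i : ℕ) < n} : Finset (Fin (n + m))) = n := by
    rw [Fin.card_filter_val_lt]; omega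
  rw [Fin.sum_univ_add]
  have hlt (i : Fin n) : ((Fin.castAdd m i : Fin (n + m)) : ℕ) < n := i.is_lt
  have hge (i : Fin m) : ¬ ((Fin.natAdd n i : Fin (n + m)) : ℕ) < n := by simp
  simp only [hlt, hge, if_true, if_false, mem_filter_univ, card_erase_of_mem, erase_eq_of_notMem,
    not_false_eq_true, hcard, sum_const, card_univ, Fintype.card_fin, nsmul_eq_mul]
  linear_combination (1/2 : ℝ) * natCast_mul_descFactorial_sub_one n k

theorem mixedSigma_j_one (n m : ℕ) (κ : ℝ) (j : ℕ) (hj : 1 ≤ j)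
    (P A : Matrix (Fin (n + m)) (Fin (n + m)) ℝ)
    (hP : P = Matrix.diagonal
      (fun i : Fin (n + m) => if (i : ℕ) < n then (1 : ℝ) / 2 else -(1 : ℝ) / 2))
    (hA : A = Matrix.diagonal (fun i : Fin (n + m) => if (i : ℕ) < n then κ else 0)) :
    mixedSigma (n + m) j 1 P A =
      (((n : ℝ) - (m : ℝ) + 1 - (j : ℝ)) / (2 * (j : ℝ))) *
        (n.choose (j - 1) : ℝ) * κ ^ (j - 1) := by
  subst hP hA
  obtain ⟨k, rfl⟩ : ∃ k, j = k + 1 := ⟨j - 1, by omega⟩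
  have hA_mem : (fun i : Fin (n + m) => if (i : ℕ) < n then κ else 0) =
      fun i => if i ∈ ({i | (i : ℕ) < n} : Finset (Fin (n + m))) then κ else 0 := by
    simp only [mem_filter_univ]
  rw [hA_mem, mixedSigma_diagonal,
    sum_injective_head_mul_prod_tail_ite_mem
      (fun i : Fin (n + m) => if (i : ℕ) < n then 1 / 2 else -1 / 2),
    sum_sign_mul_descFactorial_card_erase,
    Nat.descFactorial_eq_factorial_mul_choose, Nat.factorial_succ, Nat.add_sub_cancel]
  push_cast
  field_simp
  ring
end

section
/- Let P = (1/2)Id_n ⊕ (−1/2)Id_m and A = κ·Id_n ⊕ 0·Id_m be diagonal matrices of size n + m. Then the mixed symmetric function σ_{3,2}(P,A), the polarization of σ_3 with two copies of P and one copy of A, equals (n/24)·(n² − 2mn + m² − 3n + m + 2)·κ. -/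
open Finset

lemma genK_diag (d : ℕ) (I : Fin 3 → Fin d) :
    genKronecker I I = if I 0 = I 1 ∨ I 0 = I 2 ∨ I 1 = I 2 then 0 else 1 := by
  unfold genKronecker
  split_ifs with h
  · rcases h with h | h | h
    · exact Matrix.det_zero_of_row_eq (by decide : (0 : Fin 3) ≠ 1) (by funext c; simp [h])
    · exact Matrix.det_zero_of_row_eq (by decide : (0 : Fin 3) ≠ 2) (by funext c; simp [h])
    · exact Matrix.det_zero_of_row_eq (by decide : (1 : Fin 3) ≠ 2) (by funext c; simp [h])
  · have hinj : Function.Injective I := by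
      push_neg at h
      intro a b hab
      fin_cases a <;> fin_cases b <;> simp_all
    have : (Matrix.of fun a b => if I a = I b then (1:ℝ) else 0) = 1 := by
      ext a b
      simp [Matrix.one_apply, hinj.eq_iff]
    rw [this, Matrix.det_one]

lemma sumIf (n m : ℕ) (x y : ℝ) :
    ∑ i : Fin (n + m), (if (i : ℕ) < n then x else y) = n * x + m * y := by
  rw [Fin.sum_univ_add]
  simp [Fin.is_lt, mul_comm]

lemma triple_sum (d : ℕ) (p a : Fin d → ℝ) :
    ∑ i : Fin d, ∑ j : Fin d, ∑ k : Fin d,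
        (if i = j ∨ i = k ∨ j = k then (0:ℝ) else 1) * (p i * p j * a k)
      = (∑ i, p i) * (∑ i, p i) * (∑ i, a i) - (∑ i, p i * p i) * (∑ i, a i)
        - 2 * ((∑ i, p i) * (∑ i, p i * a i)) + 2 * ∑ i, p i * p i * a i := by
  have key : ∀ i j k : Fin d,
      (if i = j ∨ i = k ∨ j = k then (0:ℝ) else 1) * (p i * p j * a k)
      = p i * p j * a k
        - (if i = j then p i * p j * a k else 0)
        - (if i = k then p i * p j * a k else 0)
        - (if j = k then p i * p j * a k else 0)
        + 2 * (if i = j then (if i = k then p i * p j * a k else 0) else 0) := by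
    intro i j k
    by_cases h1 : i = j <;> by_cases h2 : i = k <;> by_cases h3 : j = k <;>
      simp_all <;> ring
  simp only [key, Finset.sum_sub_distrib, Finset.sum_add_distrib]
  have hfull : ∑ i : Fin d, ∑ j : Fin d, ∑ k : Fin d, p i * p j * a k
      = (∑ i, p i) * (∑ i, p i) * (∑ i, a i) := by
    simp only [← Finset.sum_mul, ← Finset.mul_sum]
  have h1 : ∑ i : Fin d, ∑ j : Fin d, ∑ k : Fin d,
      (if i = j then p i * p j * a k else 0) = (∑ i, p i * p i) * (∑ i, a i) := by
    have e1 : ∀ i j : Fin d, ∑ k : Fin d, (if i = j then p i * p j * a k else 0)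
        = (if i = j then p i * p j else 0) * ∑ k, a k := by
      intro i j; split_ifs <;> simp [Finset.mul_sum]
    simp only [e1, ← Finset.sum_mul]
    congr 1
    simp [Finset.sum_ite_eq, Finset.sum_ite_eq']
  have h2 : ∑ i : Fin d, ∑ j : Fin d, ∑ k : Fin d,
      (if i = k then p i * p j * a k else 0) = (∑ i, p i) * (∑ i, p i * a i) := by
    have e1 : ∀ i j : Fin d, ∑ k : Fin d, (if i = k then p i * p j * a k else 0)
        = p i * p j * a i := by
      intro i j; simp [Finset.sum_ite_eq]
    simp only [e1]
    have e2 : ∀ i : Fin d, ∑ j : Fin d, p i * p j * a i = (p i * a i) * ∑ j, p j := by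
      intro i; rw [Finset.mul_sum]; exact Finset.sum_congr rfl fun j _ => by ring
    simp only [e2, ← Finset.sum_mul]
    ring
  have h3 : ∑ i : Fin d, ∑ j : Fin d, ∑ k : Fin d,
      (if j = k then p i * p j * a k else 0) = (∑ i, p i) * (∑ i, p i * a i) := by
    have e1 : ∀ i j : Fin d, ∑ k : Fin d, (if j = k then p i * p j * a k else 0)
        = p i * (p j * a j) := by
      intro i j; simp [Finset.sum_ite_eq, mul_assoc]
    simp only [e1, ← Finset.mul_sum, ← Finset.sum_mul]
  have h4 : ∑ i : Fin d, ∑ j : Fin d, ∑ k : Fin d,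
      (if i = j then (if i = k then p i * p j * a k else 0) else 0)
      = ∑ i, p i * p i * a i := by
    have e1 : ∀ i j : Fin d, ∑ k : Fin d, (if i = j then (if i = k then p i * p j * a k else 0) else 0)
        = (if i = j then p i * p j * a i else 0) := by
      intro i j; split_ifs <;> simp [Finset.sum_ite_eq]
    simp only [e1]
    apply Finset.sum_congr rfl
    intro i _
    simp [Finset.sum_ite_eq]
  rw [hfull, h1, h2, h3]
  simp only [← Finset.mul_sum]
  rw [h4]
  ring

theorem mixedSigma_three_two (n m : ℕ) (κ : ℝ)
    (P A : Matrix (Fin (n + m)) (Fin (n + m)) ℝ)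
    (hP : P = Matrix.diagonal
      (fun i : Fin (n + m) => if (i : ℕ) < n then (1 : ℝ) / 2 else -(1 : ℝ) / 2))
    (hA : A = Matrix.diagonal (fun i : Fin (n + m) => if (i : ℕ) < n then κ else 0)) :
    mixedSigma (n + m) 3 2 P A =
      ((n : ℝ) / 24) *
        ((n : ℝ) ^ 2 - 2 * (m : ℝ) * (n : ℝ) + (m : ℝ) ^ 2 - 3 * (n : ℝ) + (m : ℝ) + 2) * κ := by
  subst hP hA
  set d := n + m with hd
  set p : Fin d → ℝ := fun i => if (i : ℕ) < n then (1 : ℝ) / 2 else -(1 : ℝ) / 2 with hp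
  set a : Fin d → ℝ := fun i => if (i : ℕ) < n then κ else 0 with ha
  unfold mixedSigma
  have hinner : ∀ I : Fin 3 → Fin d,
      (∑ J : Fin 3 → Fin d, genKronecker J I *
        ∏ t : Fin 3, (if (t : ℕ) < 2 then Matrix.diagonal p (I t) (J t)
          else Matrix.diagonal a (I t) (J t)))
      = genKronecker I I * (p (I 0) * p (I 1) * a (I 2)) := by
    intro I
    rw [Finset.sum_eq_single I]
    · congr 1
      rw [Fin.prod_univ_three]
      norm_num [Matrix.diagonal_apply_eq]
    · intro J _ hJ
      obtain ⟨t, ht⟩ := Function.ne_iff.mp hJ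
      apply mul_eq_zero_of_right
      apply Finset.prod_eq_zero (Finset.mem_univ t)
      split_ifs <;> exact Matrix.diagonal_apply_ne _ (Ne.symm ht)
    · intro h; exact absurd (Finset.mem_univ I) h
  simp only [hinner, genK_diag]
  let e : (Fin 3 → Fin d) ≃ Fin d × Fin d × Fin d :=
    { toFun := fun I => (I 0, I 1, I 2)
      invFun := fun x => ![x.1, x.2.1, x.2.2]
      left_inv := fun I => by funext t; fin_cases t <;> rfl
      right_inv := fun x => rfl }
  rw [Fintype.sum_equiv e
    (fun I => (if I 0 = I 1 ∨ I 0 = I 2 ∨ I 1 = I 2 then (0:ℝ) else 1) *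
      (p (I 0) * p (I 1) * a (I 2)))
    (fun x => (if x.1 = x.2.1 ∨ x.1 = x.2.2 ∨ x.2.1 = x.2.2 then (0:ℝ) else 1) *
      (p x.1 * p x.2.1 * a x.2.2))
    (fun I => rfl)]
  rw [Fintype.sum_prod_type]
  simp only [Fintype.sum_prod_type]
  rw [triple_sum d p a]
  have s1 : ∑ i, p i = n * (1/2 : ℝ) + m * (-(1)/2) := by rw [hp, hd]; exact sumIf n m _ _
  have s2 : ∑ i, p i * p i = n * (1/4 : ℝ) + m * (1/4) := by
    have : ∀ i, p i * p i = if (i : ℕ) < n then (1/4 : ℝ) else 1/4 := by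
      intro i; rw [hp]; by_cases h : (i:ℕ) < n <;> simp only [h, if_true, if_false] <;> norm_num
    rw [show (∑ i, p i * p i) = ∑ i : Fin d, (if (i:ℕ) < n then (1/4:ℝ) else 1/4) from
      Finset.sum_congr rfl fun i _ => this i, hd]
    exact sumIf n m _ _
  have s3 : ∑ i, a i = n * κ + m * 0 := by rw [ha, hd]; exact sumIf n m _ _
  have s4 : ∑ i, p i * a i = n * (κ/2 : ℝ) + m * 0 := by
    have : ∀ i, p i * a i = if (i : ℕ) < n then (κ/2 : ℝ) else 0 := by
      intro i; rw [hp, ha]; by_cases h : (i:ℕ) < n <;> simp only [h, if_true, if_false] <;> ring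
    rw [show (∑ i, p i * a i) = ∑ i : Fin d, (if (i:ℕ) < n then (κ/2:ℝ) else 0) from
      Finset.sum_congr rfl fun i _ => this i, hd]
    exact sumIf n m _ _
  have s5 : ∑ i, p i * p i * a i = n * (κ/4 : ℝ) + m * 0 := by
    have : ∀ i, p i * p i * a i = if (i : ℕ) < n then (κ/4 : ℝ) else 0 := by
      intro i; rw [hp, ha]; by_cases h : (i:ℕ) < n <;> simp only [h, if_true, if_false] <;> ring
    rw [show (∑ i, p i * p i * a i) = ∑ i : Fin d, (if (i:ℕ) < n then (κ/4:ℝ) else 0) from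
      Finset.sum_congr rfl fun i _ => this i, hd]
    exact sumIf n m _ _
  rw [s1, s2, s3, s4, s5]
  norm_num [Nat.factorial]
  ring
end

section
/- Fix m ≥ 1 and let U : [0,∞) → ℝ be a positive C² solution of U'' + m·coth(m r)·U' + (m/2)·sech^{(2−m)/m}(m r/2)·csch(m r/2)·U = 0 on (0,∞) with U bounded away from 0. Then U'(r)/U(r) → 0 as r → ∞. -/
/-!
For the flux `V r = sinh (m r) U'(r)` the equation becomes `V' = -sinh (m r) q(r) U`, where
`q` is the potential; since `sinh (m r) q(r) = m cosh (m r / 2) ^ ((2m - 2)/m) > 0`, `V` decreases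
from `V 0 = 0`. Hence `U' ≤ 0` and `U ≤ U 0`, and as `sinh (m r) q(r) ≤ m e^{(m-1) r}` the mean
value theorem gives `V r ≥ -m U(0) r e^{(m-1) r}`. Dividing by `sinh (m r) ≥ e^{m r}/4` yields
`|U'(r)| ≤ 4 m U(0) r e^{-r} → 0`, and `U` is bounded below by a positive constant.
-/

open Real Filter Set

noncomputable def potential (M r : ℝ) : ℝ :=
  (M / 2) * ((cosh (M * r / 2))⁻¹ ^ ((2 - M) / M)) * (sinh (M * r / 2))⁻¹

lemma potential_pos {M r : ℝ} (hM : 0 < M) (hr : 0 < r) : 0 < potential M r := by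
  have : 0 < sinh (M * r / 2) := sinh_pos_iff.mpr (by positivity)
  unfold potential
  positivity

lemma sinh_mul_mul_potential {M r : ℝ} (hMr : M * r ≠ 0) :
    sinh (M * r) * potential M r = M * cosh (M * r / 2) ^ ((2 * M - 2) / M) := by
  have hM : M ≠ 0 := left_ne_zero_of_mul hMr
  have hs : sinh (M * r / 2) ≠ 0 := by simpa using hMr
  have hc : 0 < cosh (M * r / 2) := cosh_pos _
  rw [show M * r = 2 * (M * r / 2) by ring, sinh_two_mul, potential,
    show 2 * (M * r / 2) / 2 = M * r / 2 by ring, inv_rpow hc.le, ← rpow_neg hc.le,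
    show (2 * M - 2) / M = 1 + -((2 - M) / M) by field_simp; ring, rpow_add hc, rpow_one]
  field_simp

lemma cosh_le_exp {x : ℝ} (hx : 0 ≤ x) : cosh x ≤ exp x := by
  rw [cosh_eq]
  linarith [exp_le_exp.mpr (neg_le_self hx)]

lemma sinh_mul_mul_potential_le {M r : ℝ} (hM : 1 ≤ M) (hr : 0 < r) :
    sinh (M * r) * potential M r ≤ M * exp ((M - 1) * r) := by
  have hM0 : 0 < M := by linarith
  rw [sinh_mul_mul_potential (by positivity)]
  have hexp : 0 ≤ (2 * M - 2) / M := div_nonneg (by linarith) hM0.le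
  calc M * cosh (M * r / 2) ^ ((2 * M - 2) / M)
      ≤ M * exp (M * r / 2) ^ ((2 * M - 2) / M) := by
        gcongr
        exact cosh_le_exp (by positivity)
    _ = M * exp ((M - 1) * r) := by
        rw [← exp_mul]
        congr 2
        field_simp

lemma exp_div_four_le_sinh {x : ℝ} (hx : 1 ≤ x) : exp x / 4 ≤ sinh x := by
  have h1 : exp (-x) ≤ 1 := exp_le_one_iff.mpr (by linarith)
  have h2 : 2 ≤ exp x := by linarith [add_one_le_exp x]
  rw [sinh_eq]
  linarith

theorem hasDerivAt_mul_of_ode {p u u' : ℝ → ℝ} {p' u'' q r : ℝ}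
    (hp : HasDerivAt p p' r) (hu' : HasDerivAt u' u'' r) (hpr : p r ≠ 0)
    (hode : u'' + p' / p r * u' r + q * u r = 0) :
    HasDerivAt (fun x => p x * u' x) (-(p r * q * u r)) r := by
  refine (hp.mul hu').congr_deriv ?_
  have hu'' : u'' = -(p' / p r * u' r) - q * u r := by linarith
  rw [hu'']
  field_simp
  ring

theorem ContDiffOn.hasDerivAt_deriv {f : ℝ → ℝ} {s : Set ℝ} {r : ℝ} (hf : ContDiffOn ℝ 2 f s)
    (hs : s ∈ nhds r) : HasDerivAt (deriv f) (deriv (deriv f) r) r := by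
  have hf' : ContDiffOn ℝ 1 (deriv f) (interior s) :=
    (hf.mono interior_subset).deriv_of_isOpen isOpen_interior (by norm_num)
  exact ((hf'.differentiableOn one_ne_zero).differentiableAt
    (isOpen_interior.mem_nhds (mem_interior_iff_mem_nhds.mpr hs))).hasDerivAt

/-- The one-sided derivative makes the flux continuous on `[0, ∞)`. -/
noncomputable def flux (M : ℝ) (U : ℝ → ℝ) (r : ℝ) : ℝ :=
  sinh (M * r) * derivWithin U (Ici 0) r

def SolvesRadialEq (M : ℝ) (U : ℝ → ℝ) : Prop :=
  ∀ r, 0 < r → deriv (deriv U) r + M * (cosh (M * r) / sinh (M * r)) * deriv U r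
    + potential M r * U r = 0

section Flux

variable {M : ℝ} {U : ℝ → ℝ}

lemma flux_zero : flux M U 0 = 0 := by
  simp [flux]

lemma flux_eq {r : ℝ} (hr : 0 < r) : flux M U r = sinh (M * r) * deriv U r := by
  rw [flux, derivWithin_of_mem_nhds (Ici_mem_nhds hr)]

lemma continuousOn_flux (hU : ContDiffOn ℝ 2 U (Ici 0)) : ContinuousOn (flux M U) (Ici 0) :=
  (continuous_sinh.comp (continuous_const.mul continuous_id)).continuousOn.mul
    (hU.continuousOn_derivWithin (uniqueDiffOn_Ici 0) (by norm_num))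

lemma hasDerivAt_flux (hM : 0 < M) (hU : ContDiffOn ℝ 2 U (Ici 0)) (hode : SolvesRadialEq M U)
    {r : ℝ} (hr : 0 < r) :
    HasDerivAt (flux M U) (-(sinh (M * r) * potential M r * U r)) r := by
  have hsinh : HasDerivAt (fun x => sinh (M * x)) (cosh (M * r) * M) r := by
    simpa using ((hasDerivAt_id r).const_mul M).sinh
  have hflux : HasDerivAt (fun x => sinh (M * x) * deriv U x) _ r :=
    hasDerivAt_mul_of_ode hsinh (hU.hasDerivAt_deriv (Ici_mem_nhds hr))
      (sinh_pos_iff.mpr (by positivity)).ne' (by convert hode r hr using 3; ring)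
  refine hflux.congr_of_eventuallyEq ?_
  filter_upwards [Ioi_mem_nhds hr] with x hx
  exact flux_eq hx

lemma flux_nonpos (hM : 0 < M) (hU : ContDiffOn ℝ 2 U (Ici 0)) (hode : SolvesRadialEq M U)
    (hpos : ∀ r, 0 ≤ r → 0 < U r) {r : ℝ} (hr : 0 ≤ r) : flux M U r ≤ 0 := by
  have hanti : AntitoneOn (flux M U) (Ici 0) := by
    refine antitoneOn_of_hasDerivWithinAt_nonpos (convex_Ici 0) (continuousOn_flux hU)
      (f' := fun x => -(sinh (M * x) * potential M x * U x)) (fun x hx => ?_) (fun x hx => ?_)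
    all_goals rw [interior_Ici] at hx
    · exact (hasDerivAt_flux hM hU hode hx).hasDerivWithinAt
    · have hq := potential_pos hM hx
      have hs := sinh_pos_iff.mpr (mul_pos hM hx)
      have hUx := hpos x hx.le
      simp only [neg_nonpos]
      positivity
  simpa [flux_zero] using hanti self_mem_Ici hr hr

lemma deriv_nonpos_of_solvesRadialEq (hM : 0 < M) (hU : ContDiffOn ℝ 2 U (Ici 0))
    (hode : SolvesRadialEq M U) (hpos : ∀ r, 0 ≤ r → 0 < U r) {r : ℝ} (hr : 0 < r) :
    deriv U r ≤ 0 := by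
  have h := flux_nonpos hM hU hode hpos hr.le
  rw [flux_eq hr] at h
  exact nonpos_of_mul_nonpos_right h (sinh_pos_iff.mpr (mul_pos hM hr))

lemma antitoneOn_of_solvesRadialEq (hM : 0 < M) (hU : ContDiffOn ℝ 2 U (Ici 0))
    (hode : SolvesRadialEq M U) (hpos : ∀ r, 0 ≤ r → 0 < U r) : AntitoneOn U (Ici 0) := by
  refine antitoneOn_of_deriv_nonpos (convex_Ici 0) hU.continuousOn ?_ (fun x hx => ?_)
  · rw [interior_Ici]
    exact (hU.mono Ioi_subset_Ici_self).differentiableOn two_ne_zero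
  · rw [interior_Ici] at hx
    exact deriv_nonpos_of_solvesRadialEq hM hU hode hpos hx

lemma neg_mul_le_flux (hM : 1 ≤ M) (hU : ContDiffOn ℝ 2 U (Ici 0)) (hode : SolvesRadialEq M U)
    (hpos : ∀ r, 0 ≤ r → 0 < U r) {r : ℝ} (hr : 0 ≤ r) :
    -(M * U 0 * exp ((M - 1) * r)) * r ≤ flux M U r := by
  have hM0 : 0 < M := by linarith
  have hanti := antitoneOn_of_solvesRadialEq hM0 hU hode hpos
  have hderiv : ∀ x ∈ Ioo 0 r, HasDerivAt (flux M U) (-(sinh (M * x) * potential M x * U x)) x :=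
    fun x hx => hasDerivAt_flux hM0 hU hode hx.1
  have hbound : ∀ x ∈ Ioo 0 r,
      -(M * U 0 * exp ((M - 1) * r)) ≤ -(sinh (M * x) * potential M x * U x) := by
    intro x hx
    have hUx : U x ≤ U 0 := hanti self_mem_Ici hx.1.le hx.1.le
    have hexp : exp ((M - 1) * x) ≤ exp ((M - 1) * r) :=
      exp_le_exp.mpr (mul_le_mul_of_nonneg_left hx.2.le (by linarith))
    rw [neg_le_neg_iff]
    calc sinh (M * x) * potential M x * U x ≤ M * exp ((M - 1) * x) * U 0 :=
          mul_le_mul (sinh_mul_mul_potential_le hM hx.1) hUx (hpos x hx.1.le).le (by positivity)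
      _ ≤ M * exp ((M - 1) * r) * U 0 := by
          gcongr
          exact (hpos 0 le_rfl).le
      _ = M * U 0 * exp ((M - 1) * r) := by ring
  have hslope := (convex_Icc 0 r).mul_sub_le_image_sub_of_le_deriv
    ((continuousOn_flux hU).mono Icc_subset_Ici_self)
    (by rw [interior_Icc]; exact fun x hx => (hderiv x hx).differentiableAt.differentiableWithinAt)
    (by rw [interior_Icc]; exact fun x hx => (hderiv x hx).deriv ▸ hbound x hx)
    0 (left_mem_Icc.mpr hr) r (right_mem_Icc.mpr hr) hr
  simpa [flux_zero] using hslope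

lemma abs_deriv_le_of_solvesRadialEq (hM : 1 ≤ M) (hU : ContDiffOn ℝ 2 U (Ici 0))
    (hode : SolvesRadialEq M U) (hpos : ∀ r, 0 ≤ r → 0 < U r) {r : ℝ} (hr : 1 ≤ r) :
    |deriv U r| ≤ 4 * M * U 0 * (r * exp (-r)) := by
  have hM0 : 0 < M := by linarith
  have hr0 : 0 < r := by linarith
  have hflux := neg_mul_le_flux hM hU hode hpos hr0.le
  rw [flux_eq hr0, show (M - 1) * r = -r + M * r by ring, exp_add] at hflux
  have hsinh := exp_div_four_le_sinh (show 1 ≤ M * r by nlinarith)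
  have hneg := deriv_nonpos_of_solvesRadialEq hM0 hU hode hpos hr0
  rw [abs_of_nonpos hneg]
  refine le_of_mul_le_mul_right ?_ (exp_pos (M * r))
  nlinarith [mul_nonneg (sub_nonneg.mpr hsinh) (neg_nonneg.mpr hneg)]

end Flux

/-- If `U` is a positive `C²` solution, bounded away from zero, of
`U'' + m coth(m r) U' + (m/2) sech^{(2−m)/m}(m r/2) csch(m r/2) U = 0` on `(0,∞)`,
then `U'(r)/U(r) → 0` as `r → ∞`. -/
theorem log_deriv_tendsto_zero (m : ℕ) (hm : 1 ≤ m) (U : ℝ → ℝ)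
    (hU : ContDiffOn ℝ 2 U (Set.Ici (0 : ℝ)))
    (hpos : ∀ r : ℝ, 0 ≤ r → 0 < U r)
    (hbdd : ∃ c : ℝ, 0 < c ∧ ∀ r : ℝ, 0 ≤ r → c ≤ U r)
    (hode : ∀ r : ℝ, 0 < r →
      deriv (deriv U) r
        + (m : ℝ) * (Real.cosh ((m : ℝ) * r) / Real.sinh ((m : ℝ) * r)) * deriv U r
        + ((m : ℝ) / 2) * ((Real.cosh ((m : ℝ) * r / 2))⁻¹ ^ (((2 : ℝ) - (m : ℝ)) / (m : ℝ)))
            * (Real.sinh ((m : ℝ) * r / 2))⁻¹ * U r = 0) :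
    Tendsto (fun r : ℝ => deriv U r / U r) atTop (nhds 0) := by
  obtain ⟨c, hc, hcU⟩ := hbdd
  have hM : (1 : ℝ) ≤ m := by exact_mod_cast hm
  have hlim : Tendsto (fun r => 4 * m * U 0 / c * (r * exp (-r))) atTop (nhds 0) := by
    simpa using (tendsto_pow_mul_exp_neg_atTop_nhds_zero 1).const_mul (4 * m * U 0 / c)
  refine squeeze_zero_norm' ?_ hlim
  filter_upwards [eventually_ge_atTop 1] with r hr
  have hr0 : 0 ≤ r := by linarith
  rw [norm_div, Real.norm_eq_abs, Real.norm_of_nonneg (hpos r hr0).le]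
  calc |deriv U r| / U r ≤ |deriv U r| / c :=
        div_le_div_of_nonneg_left (abs_nonneg _) hc (hcU r hr0)
    _ ≤ 4 * m * U 0 * (r * exp (-r)) / c := by
        gcongr
        exact abs_deriv_le_of_solvesRadialEq hM hU hode hpos hr
    _ = 4 * m * U 0 / c * (r * exp (-r)) := by ring
end
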